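/- arXiv:math/0603608 — 8 statements merged into one kernel-verified Lean document; each statement's English description precedes it below -/
import Mathlib

section
/- If u is a uniformly recurrent infinite word over a finite alphabet whose language contains infinitely many palindromes, then the language of u is closed under reversal (i.e., for every factor w of u, the reversal of w is also a factor of u). -/
/-!
Since the palindromic factors are infinitely many and there are only finitely many words of each
length over a finite alphabet, some palindromic factor `p` is at least as long as the recurrence
constant `R(|w|)`. Uniform recurrence places `w` inside `p`, so `w.reverse` lies inside
`p.reverse = p` and is a factor as well.
-/

/-- `w` is a (finite) factor of the infinite word `u`. -/
def IsFactor {A : Type*} (u : ℕ → A) (w : List A) : Prop :=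
  ∃ i, w = (List.range w.length).map fun j => u (i + j)

theorem IsFactor.of_infix {A : Type*} {u : ℕ → A} {w z : List A}
    (hw : IsFactor u w) (hz : z <:+: w) : IsFactor u z := by
  obtain ⟨i, hw⟩ := hw
  obtain ⟨s, t, rfl⟩ := hz
  refine ⟨i + s.length, List.ext_getElem (by simp) fun k hk _ => ?_⟩
  have hks : s.length + k < (s ++ z ++ t).length := by simp; omega
  calc z[k] = (s ++ z ++ t)[s.length + k] := by simp [hk]
    _ = u (i + (s.length + k)) := by rw [List.getElem_of_eq hw hks]; simp
    _ = _ := by simp [Nat.add_assoc]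

theorem IsFactor.reverse_of_infix_palindrome {A : Type*} {u : ℕ → A} {p w : List A}
    (hp : IsFactor u p) (hpal : p.reverse = p) (hw : w <:+: p) : IsFactor u w.reverse :=
  hp.of_infix (hpal ▸ hw.reverse)

theorem Set.Infinite.exists_le_length {A : Type*} [Finite A] {S : Set (List A)}
    (hS : S.Infinite) (n : ℕ) : ∃ p ∈ S, n ≤ p.length := by
  obtain ⟨p, hpS, hp⟩ := hS.exists_notMem_finite (List.finite_length_lt A n)
  exact ⟨p, hpS, not_lt.mp hp⟩

/-- If `u` is a uniformly recurrent infinite word over a finite alphabet whose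
language contains infinitely many palindromes, then the language of `u` is
closed under reversal. -/
theorem stmt0 {A : Type*} [Fintype A] (u : ℕ → A)
    (hur : ∀ n : ℕ, ∃ R : ℕ, ∀ w : List A, IsFactor u w → w.length = R →
      ∀ z : List A, IsFactor u z → z.length = n → z <:+: w)
    (hpal : {p : List A | IsFactor u p ∧ p.reverse = p}.Infinite) :
    ∀ w : List A, IsFactor u w → IsFactor u w.reverse := by
  intro w hw
  obtain ⟨R, hR⟩ := hur w.length
  obtain ⟨p, ⟨hp, hp_pal⟩, hRp⟩ := hpal.exists_le_length R
  have hprefix : p.take R <:+: p := (List.take_prefix R p).isInfix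
  have hw_prefix : w <:+: p.take R :=
    hR _ (hp.of_infix hprefix) (List.length_take_of_le hRp) w hw rfl
  exact hp.reverse_of_infix_palindrome hp_pal (hw_prefix.trans hprefix)
end

section
/- Every finite word w contains at most |w|+1 distinct palindromic factors (counting the empty word as a palindrome). -/
/-!
Send each palindromic factor `p` of `w` to the length of the shortest prefix of `w` that ends
with `p`. This map takes values in `{0, …, |w|}` and is injective on palindromes: if two
palindromes `p`, `q` with `|p| < |q|` first end at the same position, then `p` is a suffix of `q`,
hence also a proper prefix of `q`, so `p` already ends at an earlier position.
-/

namespace List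

variable {A : Type*}

theorem IsInfix.exists_isSuffix_take {p w : List A} (h : p <:+: w) :
    ∃ i ≤ w.length, p <:+ w.take i := by
  obtain ⟨s, t, rfl⟩ := h
  refine ⟨s.length + p.length, by simp, s, ?_⟩
  rw [append_assoc, take_length_add_append, take_left]

theorem exists_lt_isSuffix_take_of_reverse_eq {p q u : List A} (hp : p.reverse = p)
    (hq : q.reverse = q) (hpq : p <:+ q) (hlt : p.length < q.length) (hqu : q <:+ u) :
    ∃ j < u.length, p <:+ u.take j := by
  obtain ⟨r, rfl⟩ : p <+: q := by simpa [hp, hq] using reverse_prefix.mpr hpq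
  obtain ⟨s, rfl⟩ := hqu
  refine ⟨s.length + p.length, ?_, s, ?_⟩
  · simp only [length_append] at hlt ⊢
    omega
  · rw [take_length_add_append, take_left]

/-- Junk value `0` when `p` is not a factor of `w`. -/
noncomputable def firstOccurrenceEnd (w p : List A) : ℕ :=
  sInf {i | p <:+ w.take i}

variable {w p : List A}

theorem firstOccurrenceEnd_le {i : ℕ} (h : p <:+ w.take i) : firstOccurrenceEnd w p ≤ i :=
  Nat.sInf_le h

theorem IsInfix.firstOccurrenceEnd_le_length (h : p <:+: w) :
    firstOccurrenceEnd w p ≤ w.length :=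
  let ⟨_, hi, hpi⟩ := h.exists_isSuffix_take
  (firstOccurrenceEnd_le hpi).trans hi

theorem IsInfix.isSuffix_take_firstOccurrenceEnd (h : p <:+: w) :
    p <:+ w.take (firstOccurrenceEnd w p) :=
  let ⟨i, _, hpi⟩ := h.exists_isSuffix_take
  Nat.sInf_mem (s := {i | p <:+ w.take i}) ⟨i, hpi⟩

theorem injOn_firstOccurrenceEnd (w : List A) :
    Set.InjOn (firstOccurrenceEnd w) {p | p <:+: w ∧ p.reverse = p} := by
  intro p hp q hq hend
  wlog hle : p.length ≤ q.length generalizing p q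
  · exact (this hq hp hend.symm (le_of_not_ge hle)).symm
  have hpu := hp.1.isSuffix_take_firstOccurrenceEnd
  have hqu := hend ▸ hq.1.isSuffix_take_firstOccurrenceEnd
  have hsuffix := suffix_of_suffix_length_le hpu hqu hle
  rcases hle.eq_or_lt with hlen | hlt
  · exact hsuffix.eq_of_length hlen
  · obtain ⟨j, hj, hpj⟩ := exists_lt_isSuffix_take_of_reverse_eq hp.2 hq.2 hsuffix hlt hqu
    have hj' : j < firstOccurrenceEnd w p := hj.trans_le (length_take_le _ _)
    rw [take_take, min_eq_left hj'.le] at hpj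
    exact absurd (firstOccurrenceEnd_le hpj) (not_le.mpr hj')

end List

/-- Every finite word `w` contains at most `|w| + 1` distinct palindromic
factors (the empty word counts as a palindromic factor). -/
theorem stmt1 {A : Type*} (w : List A) :
    {p : List A | p <:+: w ∧ p.reverse = p}.ncard ≤ w.length + 1 := by
  have hmaps : Set.MapsTo (List.firstOccurrenceEnd w) {p | p <:+: w ∧ p.reverse = p}
      (Finset.range (w.length + 1)) := fun p hp => by
    simpa [Nat.lt_succ_iff] using hp.1.firstOccurrenceEnd_le_length
  calc _ ≤ (↑(Finset.range (w.length + 1)) : Set ℕ).ncard :=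
        Set.ncard_le_ncard_of_injOn _ hmaps (List.injOn_firstOccurrenceEnd w)
          (Finset.finite_toSet _)
    _ = w.length + 1 := by simp
end

section
/- A finite word w satisfies P(w) = |w|+1 if and only if every prefix v of w has a palindromic suffix that occurs exactly once in v. -/
/-!
Appending a letter `a` to `u` creates at most one new palindromic factor: a new factor of `u ++ [a]`
must be a suffix, and of two new palindromic suffixes the shorter one is a prefix of the longer,
hence occurs before the end, hence is already a factor of `u`. So `P(u ++ [a]) ≤ P(u) + 1`, with
equality exactly when `u ++ [a]` has a palindromic suffix not occurring in `u`, i.e. a unioccurrent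
one. Since `P([]) = 1`, `P(w) = |w| + 1` holds iff equality holds at every step, i.e. at every
nonempty prefix of `w`; the empty prefix has the unioccurrent palindromic suffix `[]`.
-/

namespace List

variable {A : Type*}

def palFactors (v : List A) : Set (List A) := {p | p <:+: v ∧ p.reverse = p}

def OccursAt (p v : List A) (i : ℕ) : Prop :=
  i + p.length ≤ v.length ∧ (v.drop i).take p.length = p

def HasUnioccurrentPalSuffix (v : List A) : Prop :=
  ∃ p, p <:+ v ∧ p.reverse = p ∧ ∃! i, OccursAt p v i

section Occurrences

variable {p q u v : List A} {i : ℕ}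

theorem occursAt_iff : OccursAt p v i ↔ ∃ s t, s.length = i ∧ v = s ++ p ++ t := by
  constructor
  · rintro ⟨hi, hocc⟩
    refine ⟨v.take i, v.drop (i + p.length), length_take_of_le (by omega), ?_⟩
    conv_lhs => rw [← take_append_drop i v, ← take_append_drop p.length (v.drop i)]
    rw [hocc, drop_drop, append_assoc, Nat.add_comm]
  · rintro ⟨s, t, rfl, rfl⟩
    refine ⟨by simp, ?_⟩
    rw [append_assoc, drop_left, take_left]

theorem isInfix_iff_exists_occursAt : p <:+: v ↔ ∃ i, OccursAt p v i := by
  simp only [occursAt_iff]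
  exact ⟨fun ⟨s, t, h⟩ => ⟨s.length, s, t, rfl, h.symm⟩, fun ⟨_, s, t, _, h⟩ => ⟨s, t, h.symm⟩⟩

theorem IsSuffix.occursAt (h : p <:+ v) : OccursAt p v (v.length - p.length) := by
  obtain ⟨s, rfl⟩ := h
  exact occursAt_iff.2 ⟨s, [], by simp, by simp⟩

theorem OccursAt.isSuffix (h : OccursAt p v i) (hend : i + p.length = v.length) : p <:+ v := by
  obtain ⟨s, t, rfl, rfl⟩ := occursAt_iff.1 h
  obtain rfl : t = [] := by simpa using hend
  exact ⟨s, by simp⟩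

theorem OccursAt.of_prefix (hpq : p <+: q) (h : OccursAt q v i) : OccursAt p v i := by
  obtain ⟨r, rfl⟩ := hpq
  obtain ⟨s, t, rfl, rfl⟩ := occursAt_iff.1 h
  exact occursAt_iff.2 ⟨s, r ++ t, rfl, by simp⟩

theorem OccursAt.append_right (h : OccursAt p u i) (l : List A) : OccursAt p (u ++ l) i := by
  obtain ⟨s, t, rfl, rfl⟩ := occursAt_iff.1 h
  exact occursAt_iff.2 ⟨s, t ++ l, rfl, by simp⟩

theorem OccursAt.end_eq_of_not_isInfix {a : A} (hp : ¬ p <:+: u)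
    (h : OccursAt p (u ++ [a]) i) : i + p.length = u.length + 1 := by
  obtain ⟨s, t, rfl, hu⟩ := occursAt_iff.1 h
  rcases t.eq_nil_or_concat with rfl | ⟨t, b, rfl⟩
  · simpa using (congrArg length hu).symm
  · rw [concat_eq_append, ← append_assoc] at hu
    exact absurd ⟨s, t, (append_inj_left' hu rfl).symm⟩ hp

theorem IsInfix.isSuffix_of_not_isInfix {a : A} (h : p <:+: u ++ [a]) (hp : ¬ p <:+: u) :
    p <:+ u ++ [a] :=
  have ⟨_, hi⟩ := isInfix_iff_exists_occursAt.1 h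
  hi.isSuffix (by simpa using hi.end_eq_of_not_isInfix hp)

end Occurrences

section Palindromes

variable {u v : List A} {a : A}

theorem palFactors_finite (v : List A) : (palFactors v).Finite :=
  v.sublists.finite_toSet.subset fun _ hp => mem_sublists.2 hp.1.sublist

theorem palFactors_mono (h : u <:+: v) : palFactors u ⊆ palFactors v :=
  fun _ hp => ⟨hp.1.trans h, hp.2⟩

theorem palFactors_nil : palFactors ([] : List A) = {[]} := by
  ext p
  simp only [palFactors, infix_nil, Set.mem_ofPred_eq, Set.mem_singleton_iff, and_iff_left_iff_imp]
  rintro rfl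
  rfl

theorem not_isInfix_of_mem_palFactors_diff {p : List A} (hp : p ∈ palFactors v \ palFactors u) :
    ¬ p <:+: u :=
  fun h => hp.2 ⟨h, hp.1.2⟩

theorem palFactors_append_singleton_diff_subsingleton :
    (palFactors (u ++ [a]) \ palFactors u).Subsingleton := by
  have hsuffix : ∀ p ∈ palFactors (u ++ [a]) \ palFactors u, p <:+ u ++ [a] :=
    fun p hp => hp.1.1.isSuffix_of_not_isInfix (not_isInfix_of_mem_palFactors_diff hp)
  -- The shorter of two palindromic suffixes is a prefix of the longer, so it occurs too early.
  have eq_of_length_le : ∀ p ∈ palFactors (u ++ [a]) \ palFactors u,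
      ∀ q ∈ palFactors (u ++ [a]) \ palFactors u, p.length ≤ q.length → p = q := by
    intro p hp q hq hpq
    have hsuf : p <:+ q := suffix_of_suffix_length_le (hsuffix p hp) (hsuffix q hq) hpq
    have hpre : p <+: q := by rw [← hp.1.2, ← hq.1.2]; exact reverse_prefix.2 hsuf
    have hocc := (hsuffix q hq).occursAt.of_prefix hpre
    have hend := hocc.end_eq_of_not_isInfix (not_isInfix_of_mem_palFactors_diff hp)
    have hq_len : q.length ≤ u.length + 1 := by simpa using (hsuffix q hq).length_le
    rw [length_append, length_singleton] at hend
    exact hpre.eq_of_length (by omega)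
  intro p hp q hq
  rcases le_total p.length q.length with h | h
  · exact eq_of_length_le p hp q hq h
  · exact (eq_of_length_le q hq p hp h).symm

theorem ncard_palFactors_append_singleton :
    (palFactors (u ++ [a])).ncard = (palFactors (u ++ [a]) \ palFactors u).ncard +
      (palFactors u).ncard :=
  (Set.ncard_sdiff_add_ncard_of_subset (palFactors_mono (prefix_append u [a]).isInfix)
    (palFactors_finite _)).symm

theorem ncard_palFactors_append_singleton_diff_le_one (u : List A) (a : A) :
    (palFactors (u ++ [a]) \ palFactors u).ncard ≤ 1 :=
  (Set.ncard_le_one (palFactors_finite _).sdiff).2 palFactors_append_singleton_diff_subsingleton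

theorem ncard_palFactors_append_singleton_le (u : List A) (a : A) :
    (palFactors (u ++ [a])).ncard ≤ (palFactors u).ncard + 1 := by
  have := ncard_palFactors_append_singleton_diff_le_one u a
  rw [ncard_palFactors_append_singleton]
  omega

theorem ncard_palFactors_le (v : List A) : (palFactors v).ncard ≤ v.length + 1 := by
  induction v using reverseRecOn with
  | nil => simp [palFactors_nil]
  | append_singleton u a ih =>
    have := ncard_palFactors_append_singleton_le u a
    simp only [length_append, length_singleton]
    omega

theorem nonempty_palFactors_diff_iff :
    (palFactors (u ++ [a]) \ palFactors u).Nonempty ↔ HasUnioccurrentPalSuffix (u ++ [a]) := by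
  constructor
  · rintro ⟨p, hp⟩
    have hnew := not_isInfix_of_mem_palFactors_diff hp
    have hsuf := hp.1.1.isSuffix_of_not_isInfix hnew
    refine ⟨p, hsuf, hp.1.2, _, hsuf.occursAt, fun i hi => ?_⟩
    have := hi.end_eq_of_not_isInfix hnew
    simp only [length_append, length_singleton]
    omega
  · rintro ⟨p, hsuf, hpal, i, -, huniq⟩
    refine ⟨p, ⟨hsuf.isInfix, hpal⟩, fun hp => ?_⟩
    obtain ⟨j, hj⟩ := isInfix_iff_exists_occursAt.1 hp.1
    -- an occurrence inside `u` would be a second one, ending before the suffix occurrence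
    have hj_eq := (huniq j (hj.append_right [a])).trans (huniq _ hsuf.occursAt).symm
    have hp_len := hsuf.length_le
    rw [length_append, length_singleton] at hj_eq hp_len
    exact absurd hj.1 (by omega)

theorem ncard_palFactors_append_singleton_eq_succ_iff :
    (palFactors (u ++ [a])).ncard = (palFactors u).ncard + 1 ↔
      HasUnioccurrentPalSuffix (u ++ [a]) := by
  have := ncard_palFactors_append_singleton_diff_le_one u a
  rw [← nonempty_palFactors_diff_iff, ← Set.ncard_pos (palFactors_finite _).sdiff,
    ncard_palFactors_append_singleton]
  omega

theorem hasUnioccurrentPalSuffix_nil : HasUnioccurrentPalSuffix ([] : List A) :=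
  ⟨[], suffix_refl _, rfl, 0, ⟨le_rfl, rfl⟩, fun _ hi => by simpa using hi.1⟩

end Palindromes

end List

/-- A finite word `w` contains exactly `|w| + 1` distinct palindromic factors
(counting the empty word) if and only if every prefix `v` of `w` has a
palindromic suffix occurring exactly once in `v` (Droubay–Justin–Pirillo). -/
theorem stmt2 {A : Type*} (w : List A) :
    {p : List A | p <:+: w ∧ p.reverse = p}.ncard = w.length + 1 ↔
      ∀ v : List A, v <+: w → ∃ p : List A, p <:+ v ∧ p.reverse = p ∧
        (∃! i : ℕ, i + p.length ≤ v.length ∧ (v.drop i).take p.length = p) := by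
  change (w.palFactors).ncard = w.length + 1 ↔ ∀ v, v <+: w → v.HasUnioccurrentPalSuffix
  induction w using List.reverseRecOn with
  | nil =>
    simpa [List.palFactors_nil] using List.hasUnioccurrentPalSuffix_nil
  | append_singleton u a ih =>
    have hle := List.ncard_palFactors_le u
    have hstep := List.ncard_palFactors_append_singleton_le u a
    simp only [List.prefix_concat_iff, or_imp, forall_and, forall_eq, ← ih,
      ← List.ncard_palFactors_append_singleton_eq_succ_iff, List.length_append,
      List.length_singleton]
    omega
end

section
/- Let φ be the substitution φ(i) = 0^t(i+1) for i < m-1, φ(m-1) = 0^s with t ≥ s ≥ 1, on alphabet {0,...,m-1}. For any finite word p over the alphabet, φ(p)·0^t is a palindrome if and only if p is a palindrome. -/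
/-!
Since `0^t` commutes with `0^s`, every letter satisfies `0^t · reverse (φ a) = φ a · 0^t`,
so pushing `0^t` through `reverse (φ p)` letter by letter gives
`reverse (φ p · 0^t) = φ (reverse p) · 0^t`.
Hence `φ p · 0^t` is a palindrome iff `φ (reverse p) = φ p`, i.e. iff `reverse p = p`,
because `φ` is injective: the last letter of `φ a` (`a + 1`, or `0` for `a = m - 1`) determines `a`.
-/

/-- The canonical substitution associated with a simple Parry number `β` with
`d_β(1) = t t ⋯ t s` (`m` digits): `φ(i) = 0^t (i+1)` for `i ≤ m-2` and
`φ(m-1) = 0^s`.  Letters are encoded as natural numbers `0, …, m-1`. -/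
def phi (m t s : ℕ) : ℕ → List ℕ := fun a =>
  if a = m - 1 then List.replicate s 0 else List.replicate t 0 ++ [a + 1]

/-- Application of a morphism to a finite word. -/
def applyMorph (f : ℕ → List ℕ) (l : List ℕ) : List ℕ := l.flatMap f

/-- `w` is a factor of the fixed point `u_β = lim φⁿ(0)` of the substitution,
i.e. `w` is a factor of some `φⁿ(0)`. -/
def inLang (f : ℕ → List ℕ) (w : List ℕ) : Prop :=
  ∃ k : ℕ, w <:+: (applyMorph f)^[k] [0]

namespace applyMorph

variable {f : ℕ → List ℕ}

@[simp]
lemma nil : applyMorph f [] = [] := rfl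

@[simp]
lemma append (p q : List ℕ) : applyMorph f (p ++ q) = applyMorph f p ++ applyMorph f q :=
  List.flatMap_append

@[simp]
lemma singleton (a : ℕ) : applyMorph f [a] = f a := List.flatMap_singleton f a

lemma getLast?_eq_map {g : ℕ → ℕ} (hf : ∀ a, (f a).getLast? = some (g a)) (p : List ℕ) :
    (applyMorph f p).getLast? = p.getLast?.map g := by
  induction p using List.reverseRecOn with
  | nil => rfl
  | append_singleton p a _ => simp [List.getLast?_append, hf]

lemma injective_of_getLast? {g : ℕ → ℕ} (hg : g.Injective)
    (hf : ∀ a, (f a).getLast? = some (g a)) : (applyMorph f).Injective := by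
  intro p q h
  induction p using List.reverseRecOn generalizing q with
  | nil => simpa [getLast?_eq_map hf] using congrArg List.getLast? h.symm
  | append_singleton p a ih =>
    have hlast : (p ++ [a]).getLast? = q.getLast? :=
      Option.map_injective hg <| by rw [← getLast?_eq_map hf, ← getLast?_eq_map hf, h]
    obtain rfl | ⟨q, b, rfl⟩ := q.eq_nil_or_concat
    · simp at hlast
    · rw [List.concat_eq_append] at h hlast ⊢
      obtain rfl : a = b := by simpa using hlast
      simp only [append, singleton] at h
      rw [ih (List.append_cancel_right h)]

lemma append_reverse_of_forall {w : List ℕ} (hw : ∀ a, w ++ (f a).reverse = f a ++ w)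
    (q : List ℕ) : w ++ (applyMorph f q).reverse = applyMorph f q.reverse ++ w := by
  induction q with
  | nil => simp
  | cons a q ih =>
    rw [← List.singleton_append, append, List.reverse_append, ← List.append_assoc, ih,
      List.reverse_append, List.reverse_singleton, append, singleton, List.append_assoc, hw,
      List.append_assoc]

end applyMorph

lemma getLast?_phi (m t s : ℕ) (hs : 1 ≤ s) (a : ℕ) :
    (phi m t s a).getLast? = some (if a = m - 1 then 0 else a + 1) := by
  unfold phi
  split_ifs
  · rw [List.getLast?_replicate, if_neg (by omega)]
  · simp

lemma applyMorph_phi_injective (m t s : ℕ) (hs : 1 ≤ s) : (applyMorph (phi m t s)).Injective :=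
  applyMorph.injective_of_getLast? (fun a b h => by split_ifs at h <;> omega)
    (getLast?_phi m t s hs)

lemma replicate_append_reverse_phi (m t s a : ℕ) :
    List.replicate t 0 ++ (phi m t s a).reverse = phi m t s a ++ List.replicate t 0 := by
  unfold phi
  split_ifs
  · simp only [List.reverse_replicate, ← List.replicate_add, Nat.add_comm]
  · simp

theorem stmt4_general (m t s : ℕ) (hs : 1 ≤ s)
    (p : List ℕ) :
    (applyMorph (phi m t s) p ++ List.replicate t 0).reverse
        = applyMorph (phi m t s) p ++ List.replicate t 0
      ↔ p.reverse = p := by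
  have hmirror : (applyMorph (phi m t s) p ++ List.replicate t 0).reverse
      = applyMorph (phi m t s) p.reverse ++ List.replicate t 0 := by
    rw [List.reverse_append, List.reverse_replicate,
      applyMorph.append_reverse_of_forall (replicate_append_reverse_phi m t s)]
  rw [hmirror, List.append_left_inj]
  exact (applyMorph_phi_injective m t s hs).eq_iff

/-- For any finite word `p` over the alphabet, `φ(p)·0^t` is a palindrome if
and only if `p` is a palindrome. -/
theorem stmt4 (m t s : ℕ) (hm : 1 ≤ m) (hs : 1 ≤ s) (hts : s ≤ t)
    (p : List ℕ) (hp : ∀ a ∈ p, a < m) :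
    (applyMorph (phi m t s) p ++ List.replicate t 0).reverse
        = applyMorph (phi m t s) p ++ List.replicate t 0
      ↔ p.reverse = p :=
  stmt4_general m t s hs p
end

section
/- Let φ be the substitution φ(i) = 0^t(i+1) for i < m-1, φ(m-1) = 0^s with t ≥ s ≥ 1, and let u_β be its fixed point starting with 0. Every factor of u_β of the form X 0^n Y with letters X, Y both nonzero satisfies: either n = t, or n = t+s with X = Y = 1. -/
/-
In `φ(v)` the nonzero letters are exactly the last letters `a + 1` of the blocks `φ(a)`,
`a ≠ m - 1`, and every block starts with `0`. So a factor `X 0ⁿ Y` of `φ(v)` is `X = a + 1`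
followed by the image of the rest of `v`, and `n` counts the leading zeros of that image:
`n = t` if it starts with `b ≠ m - 1`, and `n = s + t`, `Y = 1` if it starts with `m - 1`. In
the fixed point nonzero letters are isolated, so `m - 1` is then followed by `0` and preceded
by `a = 0`, whence `X = Y = 1`.
-/

open List

section ReplicateAppend

variable {α : Type*} {c X Y Z : α}

theorem replicate_append_eq_append_cons {q : ℕ} {A pre rest : List α} (hX : X ≠ c)
    (h : replicate q c ++ A = pre ++ X :: rest) :
    ∃ pre', pre = replicate q c ++ pre' ∧ A = pre' ++ X :: rest := by
  rcases append_eq_append_iff.1 h with ⟨pre', hpre, hA⟩ | ⟨c', hrep, hc'⟩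
  · exact ⟨pre', hpre, hA⟩
  · cases c' with
    | nil => exact ⟨[], by simpa using hrep.symm, by simpa using hc'.symm⟩
    | cons _ c' =>
      obtain ⟨rfl, -⟩ := cons_eq_cons.1 hc'
      exact absurd (eq_of_mem_replicate (hrep ▸ by simp : X ∈ replicate q c)) hX

theorem replicate_append_cons_inj {p q : ℕ} {r r' : List α} (hY : Y ≠ c) (hZ : Z ≠ c)
    (h : replicate p c ++ Y :: r = replicate q c ++ Z :: r') :
    p = q ∧ Y = Z ∧ r = r' := by
  obtain ⟨pre', hp, hZr⟩ := replicate_append_eq_append_cons hY h.symm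
  cases pre' with
  | nil =>
    obtain ⟨rfl, rfl⟩ := cons_eq_cons.1 hZr
    exact ⟨by simpa using congrArg length hp, rfl, rfl⟩
  | cons _ pre' =>
    obtain ⟨rfl, -⟩ := cons_eq_cons.1 hZr
    exact absurd (eq_of_mem_replicate (hp ▸ by simp : Z ∈ replicate p c)) hZ

end ReplicateAppend

section Substitution

variable {m t s : ℕ}

theorem phi_of_ne {a : ℕ} (ha : a ≠ m - 1) : phi m t s a = replicate t 0 ++ [a + 1] :=
  if_neg ha

theorem phi_self : phi m t s (m - 1) = replicate s 0 :=
  if_pos rfl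

theorem applyMorph_cons (f : ℕ → List ℕ) (b : ℕ) (v : List ℕ) :
    applyMorph f (b :: v) = f b ++ applyMorph f v :=
  flatMap_cons

theorem head?_applyMorph_phi (hs : 1 ≤ s) (ht : 1 ≤ t) {b : ℕ} (v : List ℕ) :
    (applyMorph (phi m t s) (b :: v)).head? = some 0 := by
  rw [applyMorph_cons]
  by_cases hb : b = m - 1
  · obtain ⟨s, rfl⟩ := Nat.exists_eq_add_of_le' hs
    simp [hb, phi_self, replicate_succ]
  · obtain ⟨t, rfl⟩ := Nat.exists_eq_add_of_le' ht
    simp [phi_of_ne hb, replicate_succ]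

theorem isChain_phi (b : ℕ) : (phi m t s b).IsChain (fun x y => x = 0 ∨ y = 0) := by
  have hzeros (n : ℕ) : (replicate n 0).IsChain (fun x y => x = 0 ∨ y = 0) :=
    isChain_replicate_of_rel n (Or.inl rfl)
  by_cases hb : b = m - 1
  · rw [hb, phi_self]
    exact hzeros s
  · rw [phi_of_ne hb]
    refine (hzeros t).append (isChain_singleton _) fun x hx _ _ => Or.inl ?_
    exact eq_of_mem_replicate (mem_of_getLast? hx)

theorem isChain_applyMorph_phi (hs : 1 ≤ s) (ht : 1 ≤ t) :
    ∀ v : List ℕ, (applyMorph (phi m t s) v).IsChain (fun x y => x = 0 ∨ y = 0)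
  | [] => by simp [applyMorph]
  | b :: v => by
    rw [applyMorph_cons]
    refine (isChain_phi b).append (isChain_applyMorph_phi hs ht v) fun _ _ y hy => Or.inr ?_
    cases v with
    | nil => simp [applyMorph] at hy
    | cons _ v => simpa [head?_applyMorph_phi hs ht v] using hy.symm

theorem exists_eq_append_cons_of_applyMorph_phi {X : ℕ} (hX : X ≠ 0) :
    ∀ {v pre rest : List ℕ}, applyMorph (phi m t s) v = pre ++ X :: rest →
      ∃ v₁ a v₂, v = v₁ ++ a :: v₂ ∧ a ≠ m - 1 ∧ X = a + 1 ∧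
        rest = applyMorph (phi m t s) v₂
  | [], _, _, h => by simp [applyMorph] at h
  | b :: v, pre, rest, h => by
    rw [applyMorph_cons] at h
    by_cases hb : b = m - 1
    · rw [hb, phi_self] at h
      obtain ⟨pre', -, h'⟩ := replicate_append_eq_append_cons hX h
      obtain ⟨v₁, a, v₂, rfl, ha, hXa, hrest⟩ := exists_eq_append_cons_of_applyMorph_phi hX h'
      exact ⟨b :: v₁, a, v₂, rfl, ha, hXa, hrest⟩
    · rw [phi_of_ne hb, append_assoc, singleton_append] at h
      obtain ⟨pre', -, h'⟩ := replicate_append_eq_append_cons hX h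
      cases pre' with
      | nil =>
        obtain ⟨hXb, hrest⟩ := cons_eq_cons.1 h'
        exact ⟨[], b, v, rfl, hb, hXb.symm, hrest.symm⟩
      | cons _ pre' =>
        obtain ⟨v₁, a, v₂, rfl, ha, hXa, hrest⟩ :=
          exists_eq_append_cons_of_applyMorph_phi hX (cons_eq_cons.1 h').2
        exact ⟨b :: v₁, a, v₂, rfl, ha, hXa, hrest⟩

theorem leading_zeros_applyMorph_phi (hm : 2 ≤ m) {b n Y : ℕ} {v r : List ℕ}
    (hv : (b :: v).IsChain (fun x y => x = 0 ∨ y = 0)) (hY : Y ≠ 0)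
    (h : applyMorph (phi m t s) (b :: v) = replicate n 0 ++ Y :: r) :
    n = t ∨ (n = t + s ∧ Y = 1 ∧ b = m - 1) := by
  rw [applyMorph_cons] at h
  by_cases hb : b = m - 1
  · cases v with
    | nil =>
      rw [hb, phi_self] at h
      simp only [applyMorph, flatMap_nil, append_nil] at h
      exact absurd (eq_of_mem_replicate (h ▸ by simp : Y ∈ replicate s 0)) hY
    | cons c v =>
      obtain rfl : c = 0 := (isChain_cons_cons.1 hv).1.resolve_left (by omega)
      rw [hb, phi_self, applyMorph_cons, phi_of_ne (by omega), append_assoc, ← append_assoc,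
        ← replicate_add, singleton_append] at h
      obtain ⟨hn, hY1, -⟩ := replicate_append_cons_inj hY (Nat.succ_ne_zero 0) h.symm
      exact Or.inr ⟨by omega, by omega, hb⟩
  · rw [phi_of_ne hb, append_assoc, singleton_append] at h
    exact Or.inl (replicate_append_cons_inj hY (Nat.succ_ne_zero b) h.symm).1

theorem factor_applyMorph_phi (hm : 2 ≤ m) {v : List ℕ}
    (hv : v.IsChain (fun x y => x = 0 ∨ y = 0)) {X Y n : ℕ} (hX : X ≠ 0) (hY : Y ≠ 0)
    (h : [X] ++ replicate n 0 ++ [Y] <:+: applyMorph (phi m t s) v) :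
    n = t ∨ (n = t + s ∧ X = 1 ∧ Y = 1) := by
  obtain ⟨pre, post, hdecomp⟩ := h
  obtain ⟨v₁, a, v₂, rfl, -, rfl, hrest⟩ :=
    exists_eq_append_cons_of_applyMorph_phi (pre := pre) (rest := replicate n 0 ++ Y :: post) hX
      (by rw [← hdecomp]; simp)
  cases v₂ with
  | nil => simp [applyMorph] at hrest
  | cons b v₂ =>
    obtain ⟨hab, hbv⟩ := isChain_cons_cons.1 (hv.suffix (suffix_append v₁ _))
    rcases leading_zeros_applyMorph_phi hm hbv hY hrest.symm with hn | ⟨hn, rfl, rfl⟩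
    · exact Or.inl hn
    · exact Or.inr ⟨hn, by rw [hab.resolve_right (by omega)], rfl⟩

theorem isChain_iterate_applyMorph_phi (hs : 1 ≤ s) (ht : 1 ≤ t) :
    ∀ k : ℕ, ((applyMorph (phi m t s))^[k] [0]).IsChain (fun x y => x = 0 ∨ y = 0)
  | 0 => isChain_singleton 0
  | k + 1 => by
    rw [Function.iterate_succ_apply']
    exact isChain_applyMorph_phi hs ht _

end Substitution

/-- Every factor of `u_β` of the form `X 0^n Y` with `X, Y` nonzero letters
satisfies: either `n = t`, or `n = t + s` with `X = Y = 1`. -/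
theorem stmt5 (m t s : ℕ) (hm : 2 ≤ m) (hs : 1 ≤ s) (hts : s ≤ t)
    (X Y n : ℕ) (hX : X ≠ 0) (hY : Y ≠ 0)
    (h : inLang (phi m t s) ([X] ++ List.replicate n 0 ++ [Y])) :
    n = t ∨ (n = t + s ∧ X = 1 ∧ Y = 1) := by
  obtain ⟨k, hk⟩ := h
  cases k with
  | zero =>
    have := hk.length_le
    simp at this
  | succ k =>
    rw [Function.iterate_succ_apply'] at hk
    exact factor_applyMorph_phi hm
      (isChain_iterate_applyMorph_phi hs (hs.trans hts) k) hX hY hk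
end

section
/- Let φ be the substitution φ(i) = 0^t(i+1) for i < m-1, φ(m-1) = 0^s with t ≥ s ≥ 1 and t even. If p₁ = w₁·reverse(w₁) is a palindrome of even length, then φ(p₁)·0^t = w₂·reverse(w₂) where w₂ = φ(w₁)·0^{t/2}; i.e., φ(p₁)·0^t is a palindrome of even length. -/
/-! Every image `φ(a)` is either `0^s` or `0^t (a+1)`, so `φ(a) · 0^t = 0^t · reverse(φ(a))`.
This conjugacy passes from letters to words: `φ(reverse w) · 0^t = 0^t · reverse(φ(w))`.
Hence `φ(w · reverse w) · 0^t = φ(w) · 0^{t/2} · 0^{t/2} · reverse(φ(w))` when `t` is even. -/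

lemma phi_append_replicate (m t s a : ℕ) :
    phi m t s a ++ List.replicate t 0 = List.replicate t 0 ++ (phi m t s a).reverse := by
  unfold phi
  split_ifs
  · simp only [List.reverse_replicate, ← List.replicate_add, Nat.add_comm]
  · simp

lemma applyMorph_reverse_append_of_conj (f : ℕ → List ℕ) (c : List ℕ)
    (hf : ∀ a, f a ++ c = c ++ (f a).reverse) (w : List ℕ) :
    applyMorph f w.reverse ++ c = c ++ (applyMorph f w).reverse := by
  induction w with
  | nil => simp [applyMorph]
  | cons a w ih =>
    calc applyMorph f (a :: w).reverse ++ c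
        = applyMorph f w.reverse ++ (f a ++ c) := by simp [applyMorph]
      _ = (applyMorph f w.reverse ++ c) ++ (f a).reverse := by rw [hf]; simp
      _ = c ++ (applyMorph f (a :: w)).reverse := by rw [ih]; simp [applyMorph]

theorem stmt13_general (m t s : ℕ)
    (ht : Even t) (w₁ : List ℕ) :
    applyMorph (phi m t s) (w₁ ++ w₁.reverse) ++ List.replicate t 0
      = (applyMorph (phi m t s) w₁ ++ List.replicate (t / 2) 0)
          ++ (applyMorph (phi m t s) w₁ ++ List.replicate (t / 2) 0).reverse := by
  obtain ⟨k, rfl⟩ := ht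
  rw [show (k + k) / 2 = k by omega]
  set φ := phi m (k + k) s
  calc applyMorph φ (w₁ ++ w₁.reverse) ++ List.replicate (k + k) 0
      = applyMorph φ w₁ ++ (applyMorph φ w₁.reverse ++ List.replicate (k + k) 0) := by
        simp [applyMorph]
    _ = applyMorph φ w₁ ++ (List.replicate (k + k) 0 ++ (applyMorph φ w₁).reverse) := by
        rw [applyMorph_reverse_append_of_conj φ _ (phi_append_replicate m (k + k) s)]
    _ = _ := by simp [List.replicate_add, -List.replicate_append_replicate]

/-- For `t` even: if `p₁ = w₁·reverse(w₁)` is an even palindrome, then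
`φ(p₁)·0^t = w₂·reverse(w₂)` with `w₂ = φ(w₁)·0^{t/2}`. -/
theorem stmt13 (m t s : ℕ) (hm : 1 ≤ m) (hs : 1 ≤ s) (hts : s ≤ t)
    (ht : Even t) (w₁ : List ℕ) (hw : ∀ x ∈ w₁, x < m) :
    applyMorph (phi m t s) (w₁ ++ w₁.reverse) ++ List.replicate t 0
      = (applyMorph (phi m t s) w₁ ++ List.replicate (t / 2) 0)
          ++ (applyMorph (phi m t s) w₁ ++ List.replicate (t / 2) 0).reverse :=
  stmt13_general m t s ht w₁
end

section
/- Let u be an infinite word with bounded palindromic complexity, i.e., there is a constant B with P(n) ≤ B for all n, where P(n) is the number of palindromic factors of u of length n. Then u has only finitely many infinite palindromic branches. -/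
/-- The pair `(c, v)` (center `c`, a letter or `none` for the empty word, and
left-infinite word `⋯v₃v₂v₁` encoded by `v : ℕ → A` with `v 0 = v₁`) is an
infinite palindromic branch of `u`: all its central factors
`vₙ⋯v₁ c v₁⋯vₙ` are factors of `u`. -/
def IsPalindromicBranch {A : Type*} (u : ℕ → A) (c : Option A) (v : ℕ → A) : Prop :=
  ∀ n : ℕ, IsFactor u
    (((List.range n).map v).reverse ++ c.toList ++ (List.range n).map v)

theorem Finset.exists_eq_of_forall_lt_eq {β : Type*} (T : Finset (ℕ → β)) :
    ∃ N, ∀ f ∈ T, ∀ g ∈ T, (∀ i < N, f i = g i) → f = g := by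
  classical
  choose! d hd using fun (p : (ℕ → β) × (ℕ → β)) (h : p.1 ≠ p.2) => Function.ne_iff.mp h
  refine ⟨(T ×ˢ T).sup fun p => d p + 1, fun f hf g hg hfg => ?_⟩
  by_contra hne
  have hlt : d (f, g) < (T ×ˢ T).sup fun p => d p + 1 :=
    Finset.le_sup (f := fun p => d p + 1) (Finset.mk_mem_product hf hg)
  exact hd (f, g) hne (hfg _ hlt)

theorem Option.toList_injective {α : Type*} :
    Function.Injective (Option.toList : Option α → List α) := by
  rintro (_ | a) (_ | b) h <;> simp_all

namespace PalindromicBranch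

variable {A : Type*}

def palindromicFactors (u : ℕ → A) (n : ℕ) : Set (List A) :=
  {p : List A | IsFactor u p ∧ p.reverse = p ∧ p.length = n}

theorem finite_palindromicFactors [Finite A] (u : ℕ → A) (n : ℕ) :
    (palindromicFactors u n).Finite :=
  (List.finite_length_eq A n).subset fun _ hp => hp.2.2

def centralFactor (c : Option A) (v : ℕ → A) (n : ℕ) : List A :=
  ((List.range n).map v).reverse ++ c.toList ++ (List.range n).map v

theorem length_centralFactor (c : Option A) (v : ℕ → A) (n : ℕ) :
    (centralFactor c v n).length = 2 * n + c.toList.length := by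
  simp only [centralFactor, List.length_append, List.length_reverse, List.length_map,
    List.length_range]
  ring

theorem reverse_centralFactor (c : Option A) (v : ℕ → A) (n : ℕ) :
    (centralFactor c v n).reverse = centralFactor c v n := by
  cases c <;> simp [centralFactor]

theorem centralFactor_mem_palindromicFactors {u : ℕ → A} {c : Option A} {v : ℕ → A}
    (h : IsPalindromicBranch u c v) (n : ℕ) :
    centralFactor c v n ∈ palindromicFactors u (2 * n + c.toList.length) :=
  ⟨h n, reverse_centralFactor c v n, length_centralFactor c v n⟩

theorem eq_of_centralFactor_eq {c c' : Option A} {v v' : ℕ → A} {n : ℕ}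
    (h : centralFactor c v n = centralFactor c' v' n) : c = c' ∧ ∀ i < n, v i = v' i := by
  rw [centralFactor, centralFactor, List.append_assoc, List.append_assoc] at h
  obtain ⟨hleft, hrest⟩ := List.append_inj h (by simp)
  have hv : (List.range n).map v = (List.range n).map v' := List.reverse_injective hleft
  rw [hv] at hrest
  exact ⟨Option.toList_injective (List.append_cancel_right hrest),
    fun i hi => List.map_eq_map_iff.mp hv i (List.mem_range.mpr hi)⟩

theorem exists_card_le_ncard_palindromicFactors [Finite A] (u : ℕ → A)
    (T : Finset (Option A × (ℕ → A))) (hT : ∀ x ∈ T, IsPalindromicBranch u x.1 x.2) :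
    ∃ N, T.card ≤ (palindromicFactors u (2 * N)).ncard
      + (palindromicFactors u (2 * N + 1)).ncard := by
  classical
  obtain ⟨N, hN⟩ := (T.image Prod.snd).exists_eq_of_forall_lt_eq
  have hmaps : ∀ x ∈ (T : Set (Option A × (ℕ → A))), centralFactor x.1 x.2 N ∈
      palindromicFactors u (2 * N) ∪ palindromicFactors u (2 * N + 1) := by
    rintro ⟨_ | _, _⟩ hx
    · exact Or.inl (centralFactor_mem_palindromicFactors (hT _ hx) N)
    · exact Or.inr (centralFactor_mem_palindromicFactors (hT _ hx) N)
  have hinj : Set.InjOn (fun x : Option A × (ℕ → A) => centralFactor x.1 x.2 N) T := by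
    intro x hx y hy hxy
    obtain ⟨hc, hv⟩ := eq_of_centralFactor_eq hxy
    exact Prod.ext hc (hN _ (Finset.mem_image_of_mem _ hx) _ (Finset.mem_image_of_mem _ hy) hv)
  refine ⟨N, ?_⟩
  calc T.card = (T : Set (Option A × (ℕ → A))).ncard := (Set.ncard_coe_finset T).symm
    _ ≤ (palindromicFactors u (2 * N) ∪ palindromicFactors u (2 * N + 1)).ncard :=
      Set.ncard_le_ncard_of_injOn _ hmaps hinj
        ((finite_palindromicFactors u _).union (finite_palindromicFactors u _))
    _ ≤ _ := Set.ncard_union_le _ _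

end PalindromicBranch

open PalindromicBranch in
/-- An infinite word over a finite alphabet with bounded palindromic
complexity has only finitely many infinite palindromic branches. -/
theorem stmt17 {A : Type*} [Fintype A] (u : ℕ → A)
    (hB : ∃ B : ℕ, ∀ n : ℕ,
      {p : List A | IsFactor u p ∧ p.reverse = p ∧ p.length = n}.ncard ≤ B) :
    {cv : Option A × (ℕ → A) | IsPalindromicBranch u cv.1 cv.2}.Finite := by
  obtain ⟨B, hB⟩ := hB
  by_contra hinf
  obtain ⟨T, hTS, hTcard⟩ := Set.Infinite.exists_subset_card_eq hinf (2 * B + 1)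
  obtain ⟨N, hN⟩ := exists_card_le_ncard_palindromicFactors u T fun x hx => hTS hx
  have hcard : T.card ≤ B + B := hN.trans (add_le_add (hB _) (hB _))
  omega
end

section
/- Let φ be the substitution φ(i) = 0^t(i+1) for i < m-1, φ(m-1) = 0^s with t ≥ s ≥ 1, t even, and let v be a left-infinite word satisfying v = φ(v)0^{t/2} as left-infinite words. Define the substitution ψ by ψ(a) = w^{-1}·φ(a)·w with w = 0^{t/2} (i.e., ψ(a) is obtained from φ(a) by removing the prefix w and appending w as suffix). Then ψ(v) = v and ψ(a) is a palindrome for every letter a. -/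
/-- The finite word `l` is a suffix of the left-infinite word `⋯v₃v₂v₁`
(encoded by `v : ℕ → ℕ` with `v 0 = v₁`, the rightmost letter). -/
def IsLSuffix (v : ℕ → ℕ) (l : List ℕ) : Prop :=
  l.reverse = (List.range l.length).map v

/-- The substitution `ψ(a) = w⁻¹·φ(a)·w`, `w = 0^{t/2}` (`t` even). -/
def psi (m t s : ℕ) : ℕ → List ℕ := fun a =>
  (phi m t s a ++ List.replicate (t / 2) 0).drop (t / 2)

lemma take_phi (m t s : ℕ) (hts : s ≤ t) (a : ℕ) :
    (phi m t s a ++ List.replicate (t / 2) 0).take (t / 2)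
      = List.replicate (t / 2) 0 := by
  unfold phi
  split
  · rw [← List.replicate_add, List.take_replicate]
    congr 1
    omega
  · rw [List.append_assoc, List.take_append_of_le_length
      (by simp [List.length_replicate]; omega), List.take_replicate]
    congr 1
    omega

lemma w_psi (m t s : ℕ) (hts : s ≤ t) (a : ℕ) :
    List.replicate (t / 2) 0 ++ psi m t s a
      = phi m t s a ++ List.replicate (t / 2) 0 := by
  conv_rhs => rw [← List.take_append_drop (t / 2)
    (phi m t s a ++ List.replicate (t / 2) 0)]
  rw [take_phi m t s hts a]
  rfl

lemma w_morph (m t s : ℕ) (hts : s ≤ t) (l : List ℕ) :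
    List.replicate (t / 2) 0 ++ applyMorph (psi m t s) l
      = applyMorph (phi m t s) l ++ List.replicate (t / 2) 0 := by
  induction l with
  | nil => simp [applyMorph]
  | cons a l ih =>
      simp only [applyMorph, List.flatMap_cons] at *
      rw [← List.append_assoc, w_psi m t s hts a, List.append_assoc, ih,
        ← List.append_assoc]

lemma suffix_of_append {v : ℕ → ℕ} {y x : List ℕ} (h : IsLSuffix v (y ++ x)) :
    IsLSuffix v x := by
  unfold IsLSuffix at *
  have h1 : x.reverse = ((y ++ x).reverse).take x.length := by
    simp [List.reverse_append, List.take_left']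
  rw [h1, h, ← List.map_take, List.take_range]
  congr 1
  simp

/-- For `t` even, if the left-infinite word `v` satisfies `v = φ(v)·0^{t/2}`,
then `ψ(v) = v` and `ψ(a)` is a palindrome for every letter `a`, where
`ψ(a) = w⁻¹·φ(a)·w` with `w = 0^{t/2}`.  (A left-infinite word `z` equals `v`
iff every finite suffix of `z` is a suffix of `v`.) -/
theorem stmt18 (m t s : ℕ) (hm : 1 ≤ m) (hs : 1 ≤ s) (hts : s ≤ t)
    (ht : Even t) (v : ℕ → ℕ)
    (hv : ∀ l : List ℕ, IsLSuffix v l →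
      IsLSuffix v (applyMorph (phi m t s) l ++ List.replicate (t / 2) 0)) :
    (∀ a : ℕ, a < m → (psi m t s a).reverse = psi m t s a) ∧
      ∀ l : List ℕ, IsLSuffix v l → IsLSuffix v (applyMorph (psi m t s) l) := by
  constructor
  · intro a _
    unfold psi phi
    split
    · rw [← List.replicate_add, List.drop_replicate, List.reverse_replicate]
    · rw [List.append_assoc, List.drop_append_of_le_length
        (by simp [List.length_replicate]; omega), List.drop_replicate]
      obtain ⟨k, hk⟩ := ht
      have h2 : t - t / 2 = t / 2 := by omega
      rw [h2]
      simp [List.reverse_append]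
  · intro l hl
    have := hv l hl
    rw [← w_morph m t s hts l] at this
    exact suffix_of_append this
end
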